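/- arXiv:1706.08626 — 2 statements merged into one kernel-verified Lean document; each statement's English description precedes it below -/
import Mathlib

section
/- Let (G,P) and (H,Q) be quasi-lattice ordered groups and α : H → Aut(G) a homomorphism with αₕ(P) ⊆ P for all h ∈ H. Then (G ⋊_α H, P ⋊_α Q) is a quasi-lattice ordered group, and for (g,h), (g',h') ∈ G ⋊_α H: the pair has a common upper bound in P ⋊_α Q if and only if g, g' have a common upper bound in P and h, h' have a common upper bound in Q, in which case the least common upper bound is (g ∨ g', h ∨ h'). -/
/-- A quasi-lattice ordered group. -/
def QLO {K : Type*} [Group K] (R : Submonoid K) : Prop :=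
  (∀ k : K, k ∈ R → k⁻¹ ∈ R → k = 1) ∧
  ∀ g h : K, (∃ u, u ∈ R ∧ g⁻¹ * u ∈ R ∧ h⁻¹ * u ∈ R) →
    ∃ u, (u ∈ R ∧ g⁻¹ * u ∈ R ∧ h⁻¹ * u ∈ R) ∧
      ∀ w, w ∈ R → g⁻¹ * w ∈ R → h⁻¹ * w ∈ R → u⁻¹ * w ∈ R

/-- `u` is a common upper bound of `g` and `h` lying in `R`. -/
def IsCUB {K : Type*} [Group K] (R : Submonoid K) (g h u : K) : Prop :=
  u ∈ R ∧ g⁻¹ * u ∈ R ∧ h⁻¹ * u ∈ R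

/-- `u` is a least common upper bound of `g` and `h` in `R`. -/
def IsLCUB {K : Type*} [Group K] (R : Submonoid K) (g h u : K) : Prop :=
  IsCUB R g h u ∧ ∀ w, IsCUB R g h w → u⁻¹ * w ∈ R

/-- the semidirect product of quasi-lattice ordered groups is quasi-lattice
ordered, with joins computed coordinatewise. -/
theorem semidirect_product_QLO
    {G H : Type*} [Group G] [Group H] (φ : H →* MulAut G)
    (P : Submonoid G) (Q : Submonoid H)
    (hP : QLO P) (hQ : QLO Q)
    (hα : ∀ (h : H), ∀ p ∈ P, φ h p ∈ P) :
    ∃ R : Submonoid (G ⋊[φ] H),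
      (∀ x : G ⋊[φ] H, x ∈ R ↔ x.left ∈ P ∧ x.right ∈ Q) ∧
      QLO R ∧
      ∀ x y : G ⋊[φ] H,
        ((∃ u, IsCUB R x y u) ↔
          (∃ u, IsCUB P x.left y.left u) ∧ (∃ v, IsCUB Q x.right y.right v)) ∧
        ∀ (u : G) (v : H), IsLCUB P x.left y.left u → IsLCUB Q x.right y.right v →
          IsLCUB R x y ⟨u, v⟩ := by
  have key : ∀ (h : H) (p : G), φ h p ∈ P ↔ p ∈ P := by
    intro h p
    constructor
    · intro hp
      have := hα h⁻¹ _ hp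
      simpa using this
    · exact hα h p
  refine ⟨{ carrier := {x | x.left ∈ P ∧ x.right ∈ Q},
            one_mem' := by simp [P.one_mem, Q.one_mem],
            mul_mem' := ?_ }, ?_, ?_, ?_⟩
  · rintro a b ⟨ha1, ha2⟩ ⟨hb1, hb2⟩
    exact ⟨P.mul_mem ha1 ((key a.right b.left).mpr hb1), Q.mul_mem ha2 hb2⟩
  · intro x; exact Iff.rfl
  all_goals {
    have memR : ∀ x y : G ⋊[φ] H,
        (x⁻¹ * y).left ∈ P ∧ (x⁻¹ * y).right ∈ Q ↔
          x.left⁻¹ * y.left ∈ P ∧ x.right⁻¹ * y.right ∈ Q := by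
      intro x y
      have h1 : (x⁻¹ * y).left = φ x.right⁻¹ (x.left⁻¹ * y.left) := by
        simp [SemidirectProduct.mul_left, SemidirectProduct.inv_left, map_mul]
      have h2 : (x⁻¹ * y).right = x.right⁻¹ * y.right := by
        simp
      rw [h1, h2, key]
    first
    | refine ⟨?_, ?_⟩
      · rintro k ⟨hk1, hk2⟩ ⟨hi1, hi2⟩
        have hl : k.left = 1 := by
          apply hP.1 _ hk1
          have : (k⁻¹).left = φ k.right⁻¹ k.left⁻¹ := by simp
          rw [this, key] at hi1
          exact hi1
        have hr : k.right = 1 := by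
          apply hQ.1 _ hk2
          simpa using hi2
        exact SemidirectProduct.ext hl hr
      · rintro x y ⟨w, hw, hxw, hyw⟩
        have hxw' := (memR x w).mp hxw
        have hyw' := (memR y w).mp hyw
        obtain ⟨u, ⟨hu1, hu2, hu3⟩, hulub⟩ :=
          hP.2 x.left y.left ⟨w.left, hw.1, hxw'.1, hyw'.1⟩
        obtain ⟨v, ⟨hv1, hv2, hv3⟩, hvlub⟩ :=
          hQ.2 x.right y.right ⟨w.right, hw.2, hxw'.2, hyw'.2⟩
        refine ⟨⟨u, v⟩, ⟨⟨hu1, hv1⟩, (memR x ⟨u, v⟩).mpr ⟨hu2, hv2⟩,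
          (memR y ⟨u, v⟩).mpr ⟨hu3, hv3⟩⟩, ?_⟩
        intro z hz hxz hyz
        have hxz' := (memR x z).mp hxz
        have hyz' := (memR y z).mp hyz
        exact (memR ⟨u, v⟩ z).mpr
          ⟨hulub z.left hz.1 hxz'.1 hyz'.1, hvlub z.right hz.2 hxz'.2 hyz'.2⟩
    | intro x y
      refine ⟨⟨?_, ?_⟩, ?_⟩
      · rintro ⟨w, hw, hxw, hyw⟩
        have hxw' := (memR x w).mp hxw
        have hyw' := (memR y w).mp hyw
        exact ⟨⟨w.left, hw.1, hxw'.1, hyw'.1⟩, ⟨w.right, hw.2, hxw'.2, hyw'.2⟩⟩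
      · rintro ⟨⟨u, hu1, hu2, hu3⟩, ⟨v, hv1, hv2, hv3⟩⟩
        exact ⟨⟨u, v⟩, ⟨hu1, hv1⟩, (memR x ⟨u, v⟩).mpr ⟨hu2, hv2⟩,
          (memR y ⟨u, v⟩).mpr ⟨hu3, hv3⟩⟩
      · rintro u v ⟨⟨hu1, hu2, hu3⟩, hulub⟩ ⟨⟨hv1, hv2, hv3⟩, hvlub⟩
        refine ⟨⟨⟨hu1, hv1⟩, (memR x ⟨u, v⟩).mpr ⟨hu2, hv2⟩,
          (memR y ⟨u, v⟩).mpr ⟨hu3, hv3⟩⟩, ?_⟩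
        rintro w ⟨hw, hxw, hyw⟩
        have hxw' := (memR x w).mp hxw
        have hyw' := (memR y w).mp hyw
        exact (memR ⟨u, v⟩ w).mpr
          ⟨hulub w.left ⟨hw.1, hxw'.1, hyw'.1⟩, hvlub w.right ⟨hw.2, hxw'.2, hyw'.2⟩⟩
  }
end

section
/- Let (G,P) be a quasi-lattice ordered group and F ⊆ P a finite subset. Then for large m ∈ P (in the sense that for every p ∈ P there exists q ≥ p such that the following holds whenever m ≥ q), the set F is the disjoint union of {r ∈ F : r ≤ m} and {r ∈ F : r and m have no common upper bound in P}. -/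
/-- `Ppred` holds for large `s ∈ P`. -/
def ForLarge {G : Type*} [Group G] (P : Submonoid G) (Ppred : G → Prop) : Prop :=
  ∀ p ∈ P, ∃ q ∈ P, p⁻¹ * q ∈ P ∧ ∀ s ∈ P, q⁻¹ * s ∈ P → Ppred s

/-!
Write `g ≤ h` for `g⁻¹ * h ∈ P`. Given `r` and a lower bound `p`, either `r` and `p` have a common
upper bound `u ∈ P`, and every `m ≥ u` lies above `r`; or they have none, and then no `m ≥ p` has a
common upper bound with `r`, since it would also bound `p`. Raising the lower bound once for each
element of `F` handles all of `F` at once.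
-/

section

variable {G : Type*} [Group G] {P : Submonoid G}

theorem inv_mul_mem_trans {a b c : G} (hab : a⁻¹ * b ∈ P) (hbc : b⁻¹ * c ∈ P) :
    a⁻¹ * c ∈ P := by
  simpa [mul_assoc] using mul_mem hab hbc

theorem inv_mul_self_mem (a : G) : a⁻¹ * a ∈ P := by
  rw [inv_mul_cancel]
  exact one_mem P

theorem isCUB_self_of_le {r m : G} (hm : m ∈ P) (hrm : r⁻¹ * m ∈ P) : IsCUB P r m m :=
  ⟨hm, hrm, inv_mul_self_mem m⟩

theorem IsCUB.of_le_right {r m p u : G} (h : IsCUB P r m u) (hpm : p⁻¹ * m ∈ P) :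
    IsCUB P r p u :=
  ⟨h.1, h.2.1, inv_mul_mem_trans hpm h.2.2⟩

theorem ForLarge.of_forall {A : G → Prop} (h : ∀ s ∈ P, A s) : ForLarge P A :=
  fun p hp => ⟨p, hp, inv_mul_self_mem p, fun s hs _ => h s hs⟩

theorem ForLarge.and {A B : G → Prop} (hA : ForLarge P A) (hB : ForLarge P B) :
    ForLarge P (fun s => A s ∧ B s) := by
  intro p hp
  obtain ⟨q₁, hq₁, hpq₁, hA'⟩ := hA p hp
  obtain ⟨q₂, hq₂, hq₁q₂, hB'⟩ := hB q₁ hq₁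
  exact ⟨q₂, hq₂, inv_mul_mem_trans hpq₁ hq₁q₂, fun s hs hq₂s =>
    ⟨hA' s hs (inv_mul_mem_trans hq₁q₂ hq₂s), hB' s hs hq₂s⟩⟩

theorem ForLarge.finset_forall {ι : Type*} {F : Finset ι} {A : ι → G → Prop}
    (h : ∀ i ∈ F, ForLarge P (A i)) : ForLarge P (fun s => ∀ i ∈ F, A i s) := by
  classical
  induction F using Finset.induction_on with
  | empty => exact ForLarge.of_forall fun _ _ _ hi => absurd hi (Finset.notMem_empty _)
  | insert i F _ ih =>
    simpa only [Finset.forall_mem_insert] using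
      (h i (Finset.mem_insert_self i F)).and (ih fun j hj => h j (Finset.mem_insert_of_mem hj))

theorem forLarge_le_or_not_exists_isCUB (r : G) :
    ForLarge P (fun m => r⁻¹ * m ∈ P ∨ ¬ ∃ u, IsCUB P r m u) := by
  intro p hp
  by_cases hrp : ∃ u, IsCUB P r p u
  · obtain ⟨u, hu, hru, hpu⟩ := hrp
    exact ⟨u, hu, hpu, fun m _ hum => Or.inl (inv_mul_mem_trans hru hum)⟩
  · exact ⟨p, hp, inv_mul_self_mem p, fun m _ hpm =>
      Or.inr fun ⟨u, hu⟩ => hrp ⟨u, hu.of_le_right hpm⟩⟩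

end

theorem finset_splits_for_large_general {G : Type*} [Group G] (P : Submonoid G)
    (F : Finset G) :
    ForLarge P (fun m => ∀ r ∈ F,
      (r⁻¹ * m ∈ P ∨ ¬ ∃ u, IsCUB P r m u) ∧
      ¬ (r⁻¹ * m ∈ P ∧ ¬ ∃ u, IsCUB P r m u)) :=
  ForLarge.finset_forall fun r _ =>
    (forLarge_le_or_not_exists_isCUB r).and <|
      ForLarge.of_forall fun m hm ⟨hrm, hno⟩ => hno ⟨m, isCUB_self_of_le hm hrm⟩

/-- for a finite `F ⊆ P`, for large `m ∈ P` every element of `F` either lies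
below `m` or has no common upper bound with `m`, and not both (disjoint union). -/
theorem finset_splits_for_large {G : Type*} [Group G] (P : Submonoid G) (hQLO : QLO P)
    (F : Finset G) (hF : ∀ r ∈ F, r ∈ P) :
    ForLarge P (fun m => ∀ r ∈ F,
      (r⁻¹ * m ∈ P ∨ ¬ ∃ u, IsCUB P r m u) ∧
      ¬ (r⁻¹ * m ∈ P ∧ ¬ ∃ u, IsCUB P r m u)) :=
  finset_splits_for_large_general P F
end
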